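/- Let L be an integrable random variable with q_α(L) its lower α-quantile, P[L ≥ q_α(L)] > 0, and let S be a random vector. Then RI_{ES,α}(L|S) = (E[E[L|S] | L ≥ q_α(L)] − E[L]) / (E[L | L ≥ q_α(L)] − E[L]) ≤ 1, provided the denominator E[L | L ≥ q_α(L)] − E[L] is strictly positive. -/

import Mathlib

/-!
Write `A = {q ≤ L}` and `g = E[𝟙_A | m]`. Since conditional expectation is self-adjoint,
`∫_A E[L|m] = E[g L]`, and `g` is a `[0, 1]`-valued weight with `E[g] = P[A]`. Among all such
weights, `E[g L]` is largest for `g = 𝟙_A` (Neyman–Pearson): `(g - 𝟙_A)(L - q) ≤ 0` pointwise.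
Hence `∫_A E[L|m] ≤ ∫_A L`, and dividing by `P[A]` and subtracting `E[L]` gives the bound.
-/

open MeasureTheory

/-- The lower `α`-quantile `q_α(L) = inf{y : P[L ≤ y] ≥ α}`. -/
noncomputable def lowerQuantile {Ω : Type*} {mΩ : MeasurableSpace Ω} (μ : Measure Ω)
    (L : Ω → ℝ) (α : ℝ) : ℝ :=
  sInf {y | ENNReal.ofReal α ≤ μ {ω | L ω ≤ y}}

namespace MeasureTheory

variable {Ω : Type*} {m m0 : MeasurableSpace Ω} {μ : Measure Ω} [IsFiniteMeasure μ]

theorem integral_condExp_mul_eq_integral_mul_condExp (hm : m ≤ m0) {f g : Ω → ℝ} {R : ℝ}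
    (hf : Integrable f μ) (hg : Integrable g μ) (hgR : ∀ᵐ ω ∂μ, |g ω| ≤ R) :
    ∫ ω, (μ[f|m]) ω * g ω ∂μ = ∫ ω, f ω * (μ[g|m]) ω ∂μ := by
  have hfg : Integrable (μ[f|m] * g) μ := integrable_condExp.mul_bdd hg.1 hgR
  have hfg' : Integrable (f * μ[g|m]) μ :=
    hf.mul_bdd integrable_condExp.1 (ae_bdd_abs_condExp_of_ae_bdd_abs hgR)
  calc ∫ ω, (μ[f|m]) ω * g ω ∂μ = ∫ ω, (μ[μ[f|m] * g|m]) ω ∂μ := (integral_condExp hm).symm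
    _ = ∫ ω, (μ[f|m] * μ[g|m]) ω ∂μ :=
      integral_congr_ae (condExp_mul_of_stronglyMeasurable_left stronglyMeasurable_condExp hfg hg)
    _ = ∫ ω, (μ[f * μ[g|m]|m]) ω ∂μ := integral_congr_ae
      (condExp_mul_of_stronglyMeasurable_right stronglyMeasurable_condExp hfg' hf).symm
    _ = ∫ ω, f ω * (μ[g|m]) ω ∂μ := integral_condExp hm

theorem integral_mul_le_setIntegral_of_threshold {L g : Ω → ℝ} {A : Set Ω} {q : ℝ}
    (hA : MeasurableSet A) (hL : Integrable L μ) (hg : Integrable g μ)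
    (hg0 : 0 ≤ᵐ[μ] g) (hg1 : g ≤ᵐ[μ] 1) (hgA : ∫ ω, g ω ∂μ = μ.real A)
    (hLA : ∀ᵐ ω ∂μ, ω ∈ A → q ≤ L ω) (hLAc : ∀ᵐ ω ∂μ, ω ∉ A → L ω ≤ q) :
    ∫ ω, g ω * L ω ∂μ ≤ ∫ ω in A, L ω ∂μ := by
  have hgL : Integrable (fun ω => g ω * L ω) μ := by
    refine hL.bdd_mul hg.1 (c := 1) ?_
    filter_upwards [hg0, hg1] with ω (h0 : 0 ≤ g ω) h1
    rw [Real.norm_eq_abs, abs_le]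
    exact ⟨by linarith, h1⟩
  have hLi : Integrable (A.indicator L) μ := hL.indicator hA
  have hqi : Integrable (A.indicator fun _ => q) μ := (integrable_const q).indicator hA
  -- `(g - 𝟙_A) (L - q) ≤ 0`, rearranged so that each side integrates separately
  have hpointwise : ∀ᵐ ω ∂μ,
      g ω * L ω - A.indicator L ω ≤ q * g ω - A.indicator (fun _ => q) ω := by
    filter_upwards [hg0, hg1, hLA, hLAc] with ω (h0 : 0 ≤ g ω) (h1 : g ω ≤ 1) hin hout
    by_cases hω : ω ∈ A
    · simp only [Set.indicator_of_mem hω]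
      nlinarith [hin hω]
    · simp only [Set.indicator_of_notMem hω, sub_zero]
      nlinarith [hout hω]
  have hint : ∫ ω, (g ω * L ω - A.indicator L ω) ∂μ
      ≤ ∫ ω, (q * g ω - A.indicator (fun _ => q) ω) ∂μ :=
    integral_mono_ae (hgL.sub hLi) ((hg.const_mul q).sub hqi) hpointwise
  rw [integral_sub hgL hLi, integral_sub (hg.const_mul q) hqi, integral_const_mul, hgA,
    integral_indicator hA, integral_indicator hA, setIntegral_const, smul_eq_mul] at hint
  linarith

theorem setIntegral_condExp_le_of_threshold (hm : m ≤ m0) {L : Ω → ℝ} {A : Set Ω}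
    {q : ℝ} (hA : MeasurableSet A) (hL : Integrable L μ)
    (hLA : ∀ᵐ ω ∂μ, ω ∈ A → q ≤ L ω) (hLAc : ∀ᵐ ω ∂μ, ω ∉ A → L ω ≤ q) :
    ∫ ω in A, (μ[L|m]) ω ∂μ ≤ ∫ ω in A, L ω ∂μ := by
  set i : Ω → ℝ := A.indicator 1
  have hi : Integrable i μ := (integrable_const 1).indicator hA
  have hi_abs : ∀ᵐ ω ∂μ, |i ω| ≤ 1 := .of_forall fun ω => by
    by_cases hω : ω ∈ A <;> simp [i, hω]
  have hg0 : 0 ≤ᵐ[μ] μ[i|m] := condExp_nonneg (.of_forall (Set.indicator_nonneg (by simp)))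
  have hg1 : μ[i|m] ≤ᵐ[μ] 1 := by
    have hmono := condExp_mono (m := m) hi (integrable_const (1 : ℝ))
      (.of_forall (Set.indicator_le_self' (by simp)))
    rwa [condExp_const hm] at hmono
  have hgA : ∫ ω, (μ[i|m]) ω ∂μ = μ.real A := by
    rw [integral_condExp hm, integral_indicator_one hA]
  calc ∫ ω in A, (μ[L|m]) ω ∂μ = ∫ ω, (μ[L|m]) ω * i ω ∂μ := by
        rw [← integral_indicator hA]
        congr 1 with ω
        by_cases hω : ω ∈ A <;> simp [i, hω]
    _ = ∫ ω, L ω * (μ[i|m]) ω ∂μ := integral_condExp_mul_eq_integral_mul_condExp hm hL hi hi_abs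
    _ = ∫ ω, (μ[i|m]) ω * L ω ∂μ := by simp_rw [mul_comm]
    _ ≤ ∫ ω in A, L ω ∂μ := integral_mul_le_setIntegral_of_threshold hA hL integrable_condExp
        hg0 hg1 hgA hLA hLAc

theorem setIntegral_condExp_le_setIntegral_of_le (hm : m ≤ m0) {L : Ω → ℝ} (hL : Integrable L μ)
    (q : ℝ) : ∫ ω in {ω | q ≤ L ω}, (μ[L|m]) ω ∂μ ≤ ∫ ω in {ω | q ≤ L ω}, L ω ∂μ := by
  -- `{q ≤ L}` need not be measurable; replace it by the superlevel set of a measurable version.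
  set L' := hL.1.mk L
  have hA' : MeasurableSet {ω | q ≤ L' ω} :=
    measurableSet_le measurable_const hL.1.stronglyMeasurable_mk.measurable
  have hAA' : {ω | q ≤ L ω} =ᵐ[μ] {ω | q ≤ L' ω} := by
    refine Filter.eventuallyEq_set.2 ?_
    filter_upwards [hL.1.ae_eq_mk] with ω hω
    show q ≤ L ω ↔ q ≤ L' ω
    rw [hω]
  rw [Measure.restrict_congr_set hAA']
  refine setIntegral_condExp_le_of_threshold (q := q) hm hA' hL ?_ ?_
  · filter_upwards [hL.1.ae_eq_mk] with ω hω hmem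
    rwa [hω]
  · filter_upwards [hL.1.ae_eq_mk] with ω hω hmem
    rw [hω]
    exact (not_le.1 hmem).le

end MeasureTheory

theorem risk_impact_ES_le_one_general {Ω : Type*} {m0 : MeasurableSpace Ω}
    (μ : Measure Ω) [IsProbabilityMeasure μ] (m : MeasurableSpace Ω) (hm : m ≤ m0)
    (L : Ω → ℝ) (hL : Integrable L μ) (α : ℝ)
    (hden : 0 < (∫ ω in {ω | lowerQuantile μ L α ≤ L ω}, L ω ∂μ)
        / (μ {ω | lowerQuantile μ L α ≤ L ω}).toReal - ∫ ω, L ω ∂μ) :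
    ((∫ ω in {ω | lowerQuantile μ L α ≤ L ω}, (μ[L|m]) ω ∂μ)
          / (μ {ω | lowerQuantile μ L α ≤ L ω}).toReal - ∫ ω, L ω ∂μ)
        / ((∫ ω in {ω | lowerQuantile μ L α ≤ L ω}, L ω ∂μ)
          / (μ {ω | lowerQuantile μ L α ≤ L ω}).toReal - ∫ ω, L ω ∂μ) ≤ 1 := by
  rw [div_le_one hden, sub_le_sub_iff_right]
  exact div_le_div_of_nonneg_right (setIntegral_condExp_le_setIntegral_of_le hm hL _)
    ENNReal.toReal_nonneg

/-- Upper bound 1 for the Expected-Shortfall-based risk impact: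
`RI_{ES,α}(L|S) = (E[E[L|S] | L ≥ q_α(L)] − E[L]) / (E[L | L ≥ q_α(L)] − E[L]) ≤ 1`. -/
theorem risk_impact_ES_le_one {Ω : Type*} {m0 : MeasurableSpace Ω}
    (μ : Measure Ω) [IsProbabilityMeasure μ] (m : MeasurableSpace Ω) (hm : m ≤ m0)
    (L : Ω → ℝ) (hL : Integrable L μ) (α : ℝ) (hα : α ∈ Set.Ioo (0 : ℝ) 1)
    (htail : 0 < μ {ω | lowerQuantile μ L α ≤ L ω})
    (hcont : μ {ω | L ω = lowerQuantile μ L α} = 0)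
    (hden : 0 < (∫ ω in {ω | lowerQuantile μ L α ≤ L ω}, L ω ∂μ)
        / (μ {ω | lowerQuantile μ L α ≤ L ω}).toReal - ∫ ω, L ω ∂μ) :
    ((∫ ω in {ω | lowerQuantile μ L α ≤ L ω}, (μ[L|m]) ω ∂μ)
          / (μ {ω | lowerQuantile μ L α ≤ L ω}).toReal - ∫ ω, L ω ∂μ)
        / ((∫ ω in {ω | lowerQuantile μ L α ≤ L ω}, L ω ∂μ)
          / (μ {ω | lowerQuantile μ L α ≤ L ω}).toReal - ∫ ω, L ω ∂μ) ≤ 1 :=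
  risk_impact_ES_le_one_general μ m hm L hL α hden
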